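/- Let A, Ã_k ∈ ℝ^{n×m} with Ã_k = P̃_k A for an orthogonal projection P̃_k, and α > 0. Then ‖(AAᵀ + αI)(Ã_k Ã_kᵀ + αI)⁻¹ − I‖ ≤ 2α⁻¹ ‖A‖ ‖A − Ã_k‖ in spectral norm. -/

import Mathlib

open Matrix

/-- Moore–Penrose pseudoinverse predicate (the four Penrose conditions). -/
def IsMP {p q : ℕ} (A : Matrix (Fin p) (Fin q) ℝ) (X : Matrix (Fin q) (Fin p) ℝ) : Prop :=
  A * X * A = A ∧ X * A * X = X ∧ (A * X)ᵀ = A * X ∧ (X * A)ᵀ = X * A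

/-- spectral (operator) norm of a matrix, induced by Euclidean vector norms. -/
noncomputable def specNorm {p q : ℕ} (A : Matrix (Fin p) (Fin q) ℝ) : ℝ :=
  ‖LinearMap.toContinuousLinearMap (Matrix.toEuclideanLin A)‖

/-- Euclidean norm of a vector. -/
noncomputable def enorm {p : ℕ} (x : Fin p → ℝ) : ℝ :=
  ‖(WithLp.equiv 2 (Fin p → ℝ)).symm x‖

theorem Matrix.isHermitian_transpose_mul_self {p q : ℕ} (A : Matrix (Fin p) (Fin q) ℝ) :
    (Aᵀ * A).IsHermitian := by
  simpa using Matrix.isHermitian_conjTranspose_mul_self A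

/-- the `i`-th largest singular value (0-indexed) of a real matrix. -/
noncomputable def sv {p q : ℕ} (A : Matrix (Fin p) (Fin q) ℝ) (i : Fin q) : ℝ :=
  Real.sqrt (((Matrix.isHermitian_transpose_mul_self A).eigenvalues ∘
    Tuple.sort (Matrix.isHermitian_transpose_mul_self A).eigenvalues) i.rev)


/-!
Write `B = ÃₖÃₖᵀ + αI`. The matrix in question is `(AAᵀ − ÃₖÃₖᵀ)B⁻¹`, and
`AAᵀ − ÃₖÃₖᵀ = A(A − Ãₖ)ᵀ + (A − Ãₖ)Ãₖᵀ` has norm at most `(‖A‖ + ‖Ãₖ‖)‖A − Ãₖ‖ ≤ 2‖A‖‖A − Ãₖ‖`,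
because an orthogonal projection has norm at most one. Since `ÃₖÃₖᵀ` is positive semidefinite,
`re ⟪Bx, x⟫ ≥ α‖x‖²`, hence `α‖x‖ ≤ ‖Bx‖` and `‖B⁻¹‖ ≤ α⁻¹`.
-/

open scoped Matrix.Norms.L2Operator ComplexOrder InnerProductSpace

namespace Matrix

variable {𝕜 : Type*} [RCLike 𝕜] {m n : Type*} [DecidableEq n]

theorem PosSemidef.posDef_add_smul_one {M : Matrix n n 𝕜} (hM : M.PosSemidef) {α : ℝ}
    (hα : 0 < α) : (M + α • (1 : Matrix n n 𝕜)).PosDef :=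
  PosDef.posSemidef_add hM (PosDef.one.smul hα)

variable [Fintype m] [Fintype n]

theorem mul_nonsing_inv_sub_one {R : Type*} [CommRing R] {A B : Matrix n n R}
    (hB : IsUnit B.det) : A * B⁻¹ - 1 = (A - B) * B⁻¹ := by
  rw [Matrix.sub_mul, mul_nonsing_inv _ hB]

theorem l2_opNorm_inv_add_smul_one_le {M : Matrix n n 𝕜} (hM : M.PosSemidef)
    {α : ℝ} (hα : 0 < α) : ‖(M + α • (1 : Matrix n n 𝕜))⁻¹‖ ≤ α⁻¹ := by
  set B := M + α • (1 : Matrix n n 𝕜)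
  have hB : B * B⁻¹ = 1 :=
    mul_nonsing_inv _ <| (isUnit_iff_isUnit_det B).mp (hM.posDef_add_smul_one hα).isUnit
  have hcoercive (x : EuclideanSpace 𝕜 n) :
      ‖x‖ ^ 2 * (⟨α, hα.le⟩ : NNReal) ≤ ‖⟪toEuclideanCLM (𝕜 := 𝕜) B x, x⟫_𝕜‖ := by
    have hMx : 0 ≤ RCLike.re ⟪toEuclideanCLM (𝕜 := 𝕜) M x, x⟫_𝕜 :=
      (isPositive_toEuclideanLin_iff.mpr hM).re_inner_nonneg_left x
    have hBx : toEuclideanCLM (𝕜 := 𝕜) B x = toEuclideanCLM (𝕜 := 𝕜) M x + (α : 𝕜) • x := by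
      rw [map_add, RCLike.real_smul_eq_coe_smul (K := 𝕜), map_smul, map_one]
      rfl
    refine le_trans ?_ (RCLike.re_le_norm _)
    rw [hBx, inner_add_left, inner_smul_left, RCLike.conj_ofReal, inner_self_eq_norm_sq_to_K,
      map_add, ← RCLike.ofReal_pow, ← RCLike.ofReal_mul, RCLike.ofReal_re]
    linarith
  have hanti := ContinuousLinearMap.antilipschitz_of_forall_le_inner_map _
    (show (0 : NNReal) < ⟨α, hα.le⟩ from hα) hcoercive
  rw [cstar_norm_def]
  refine ContinuousLinearMap.opNorm_le_bound _ (by positivity) fun x => ?_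
  calc ‖toEuclideanCLM (𝕜 := 𝕜) B⁻¹ x‖
      ≤ α⁻¹ * ‖toEuclideanCLM (𝕜 := 𝕜) B (toEuclideanCLM (𝕜 := 𝕜) B⁻¹ x)‖ :=
        hanti.le_mul_norm (map_zero _) _
    _ = α⁻¹ * ‖x‖ := by
        rw [← mul_apply_eq_comp, ← map_mul, hB, map_one]
        rfl

theorem l2_opNorm_mul_conjTranspose_sub_le [DecidableEq m] (A B : Matrix m n 𝕜) :
    ‖A * Aᴴ - B * Bᴴ‖ ≤ (‖A‖ + ‖B‖) * ‖A - B‖ := by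
  have hsplit : A * Aᴴ - B * Bᴴ = A * (A - B)ᴴ + (A - B) * Bᴴ := by
    rw [conjTranspose_sub, Matrix.mul_sub, Matrix.sub_mul]
    abel
  calc ‖A * Aᴴ - B * Bᴴ‖ ≤ ‖A‖ * ‖(A - B)ᴴ‖ + ‖A - B‖ * ‖Bᴴ‖ := by
        rw [hsplit]
        exact (norm_add_le _ _).trans (add_le_add (l2_opNorm_mul _ _) (l2_opNorm_mul _ _))
    _ = (‖A‖ + ‖B‖) * ‖A - B‖ := by
        rw [l2_opNorm_conjTranspose, l2_opNorm_conjTranspose]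
        ring

theorem l2_opNorm_mul_le_of_isStarProjection [DecidableEq m] {P : Matrix m m 𝕜}
    (hP : IsStarProjection P) (A : Matrix m n 𝕜) : ‖P * A‖ ≤ ‖A‖ :=
  (l2_opNorm_mul P A).trans <| mul_le_of_le_one_left (norm_nonneg A) hP.norm_le

end Matrix

theorem specNorm_eq_l2_opNorm {p q : ℕ} (M : Matrix (Fin p) (Fin q) ℝ) : specNorm M = ‖M‖ :=
  rfl

/-- `‖(AAᵀ + αI)(ÃₖÃₖᵀ + αI)⁻¹ − I‖ ≤ 2α⁻¹‖A‖‖A − Ãₖ‖`. -/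
theorem stmt14 {n m : ℕ} (A Ak : Matrix (Fin n) (Fin m) ℝ) (P : Matrix (Fin n) (Fin n) ℝ)
    (hPsym : Pᵀ = P) (hPidem : P * P = P) (hAk : Ak = P * A) (α : ℝ) (hα : 0 < α) :
    specNorm ((A * Aᵀ + α • (1 : Matrix (Fin n) (Fin n) ℝ))
        * (Ak * Akᵀ + α • (1 : Matrix (Fin n) (Fin n) ℝ))⁻¹ - 1)
      ≤ 2 * α⁻¹ * specNorm A * specNorm (A - Ak) := by
  set B := Ak * Akᵀ + α • (1 : Matrix (Fin n) (Fin n) ℝ)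
  have hAkAk : (Ak * Akᵀ).PosSemidef := by
    simpa using posSemidef_self_mul_conjTranspose Ak
  have hB : IsUnit B.det := (isUnit_iff_isUnit_det B).mp (hAkAk.posDef_add_smul_one hα).isUnit
  have hAk_le : ‖Ak‖ ≤ ‖A‖ := hAk ▸ l2_opNorm_mul_le_of_isStarProjection ⟨hPidem, hPsym⟩ A
  have hgram : ‖A * Aᵀ - Ak * Akᵀ‖ ≤ (‖A‖ + ‖Ak‖) * ‖A - Ak‖ := by
    simpa using l2_opNorm_mul_conjTranspose_sub_le A Ak
  simp only [specNorm_eq_l2_opNorm]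
  rw [mul_nonsing_inv_sub_one hB, add_sub_add_right_eq_sub]
  calc ‖(A * Aᵀ - Ak * Akᵀ) * B⁻¹‖ ≤ ‖A * Aᵀ - Ak * Akᵀ‖ * ‖B⁻¹‖ := l2_opNorm_mul _ _
    _ ≤ (‖A‖ + ‖A‖) * ‖A - Ak‖ * α⁻¹ := by
        gcongr
        · exact hgram.trans (by gcongr)
        · exact l2_opNorm_inv_add_smul_one_le hAkAk hα
    _ = 2 * α⁻¹ * ‖A‖ * ‖A - Ak‖ := by ring
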